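/- If b > 1, x > 0, and |J₀(y)| ≤ √(2/(π y)) for all y > 0, then |I(b,x)| ≤ ((2 - 4/π)/3) · x/b³ + √(2/π) · √(b/x). -/

import Mathlib

/-!
Compare the integrand of `I(b, x)` with that of `J₀(x / b)`, namely `cos ((x / b) t) / √(1 - t²)`.
Since `s ≤ arcsin s ≤ s + (π/2 - 1) s³` on `[0, 1]` and `cos` is 1-Lipschitz, the numerators differ
by at most `x (π/2 - 1) t³ / b³`, and `∫₀¹ t³ / √(1 - t²) dt = 2/3`; the Bessel bound takes care
of `J₀(x / b)`.
-/

open Real Set MeasureTheory intervalIntegral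

lemma min_le_of_deriv_neg_persists {f f' : ℝ → ℝ} {a b s : ℝ} (hf : ContinuousOn f (Icc a b))
    (hderiv : ∀ r ∈ Ioo a b, HasDerivAt f (f' r) r)
    (hpersist : ∀ r ∈ Ioo a b, ∀ u ∈ Ioo a b, r ≤ u → f' r < 0 → f' u ≤ 0)
    (hs : s ∈ Icc a b) : min (f a) (f b) ≤ f s := by
  by_cases hinc : ∀ r ∈ Ioo a s, 0 ≤ f' r
  · have hmono : MonotoneOn f (Icc a s) := by
      refine monotoneOn_of_hasDerivWithinAt_nonneg (convex_Icc a s)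
        (hf.mono (Icc_subset_Icc_right hs.2)) (fun r hr => ?_) (by rwa [interior_Icc])
      rw [interior_Icc] at hr ⊢
      exact (hderiv r ⟨hr.1, hr.2.trans_le hs.2⟩).hasDerivWithinAt
    exact (min_le_left _ _).trans (hmono (left_mem_Icc.2 hs.1) (right_mem_Icc.2 hs.1) hs.1)
  · push Not at hinc
    obtain ⟨r, hr, hneg⟩ := hinc
    have hr' : r ∈ Ioo a b := ⟨hr.1, hr.2.trans_le hs.2⟩
    have hanti : AntitoneOn f (Icc s b) := by
      refine antitoneOn_of_hasDerivWithinAt_nonpos (f' := f') (convex_Icc s b)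
        (hf.mono (Icc_subset_Icc_left hs.1)) (fun u hu => ?_) (fun u hu => ?_) <;>
        rw [interior_Icc] at hu
      · rw [interior_Icc]
        exact (hderiv u ⟨hs.1.trans_lt hu.1, hu.2⟩).hasDerivWithinAt
      · exact hpersist r hr' u ⟨hs.1.trans_lt hu.1, hu.2⟩ (hr.2.trans hu.1).le hneg
    exact (min_le_right _ _).trans (hanti (left_mem_Icc.2 hs.2) (right_mem_Icc.2 hs.2) hs.2)

lemma quadratic_neg_of_le {α β γ v w : ℝ} (hα : 0 ≤ α) (hγ : 0 ≤ γ) (hv0 : 0 ≤ v)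
    (hv : α + β * v - γ * v ^ 2 < 0) (hvw : v ≤ w) : α + β * w - γ * w ^ 2 < 0 := by
  have hv_pos : 0 < v := hv0.lt_of_ne (by rintro rfl; linarith)
  -- concavity of the quadratic, as a polynomial identity
  have key : v * (α + β * w - γ * w ^ 2)
      = w * (α + β * v - γ * v ^ 2) - (w - v) * α - γ * v * w * (w - v) := by ring
  have : v * (α + β * w - γ * w ^ 2) < 0 := by
    rw [key]
    nlinarith [mul_nonneg (mul_nonneg (mul_nonneg hγ hv0) (hv0.trans hvw)) (sub_nonneg.2 hvw),
      mul_nonneg (sub_nonneg.2 hvw) hα, mul_neg_of_pos_of_neg (hv_pos.trans_le hvw) hv]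
  exact neg_of_mul_neg_right this hv0

-- `(1 + 3 c u)² (1 - u) - 1 = u · ((6c - 1) + (9c² - 6c) u - 9c² u²)`
lemma one_add_mul_sq_lt_one_div_sqrt_iff {c r : ℝ} (hc : 0 ≤ c) (hr0 : 0 < r) (hr1 : r < 1) :
    1 + 3 * c * r ^ 2 < 1 / √(1 - r ^ 2) ↔
      (6 * c - 1) + (9 * c ^ 2 - 6 * c) * r ^ 2 - 9 * c ^ 2 * (r ^ 2) ^ 2 < 0 := by
  have hu : 0 < 1 - r ^ 2 := by nlinarith
  have hA : 0 ≤ 1 + 3 * c * r ^ 2 := by positivity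
  rw [lt_div_iff₀ (sqrt_pos.2 hu), ← sq_lt_one_iff₀ (mul_nonneg hA (sqrt_nonneg _)), mul_pow,
    sq_sqrt hu.le]
  constructor
  · intro h; nlinarith [sq_pos_of_pos hr0]
  · intro h; nlinarith [mul_neg_of_pos_of_neg (sq_pos_of_pos hr0) h]

/- `s + (π/2 - 1) s³ - arcsin s` vanishes at `0` and `1`; its derivative has the sign of a concave
quadratic in `s²` that is positive at `0`, so the function goes up and then down, staying `≥ 0`. -/
lemma arcsin_le_add_mul_pow_three {s : ℝ} (hs0 : 0 ≤ s) (hs1 : s ≤ 1) :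
    arcsin s ≤ s + (π / 2 - 1) * s ^ 3 := by
  set c := π / 2 - 1 with hc_def
  have hc : 1 / 6 ≤ c := by linarith [pi_gt_three]
  set f : ℝ → ℝ := fun r => r + c * r ^ 3 - arcsin r
  set f' : ℝ → ℝ := fun r => 1 + 3 * c * r ^ 2 - 1 / √(1 - r ^ 2)
  have hderiv : ∀ r ∈ Ioo (0 : ℝ) 1, HasDerivAt f (f' r) r := by
    intro r hr
    refine (((hasDerivAt_id' r).add ((hasDerivAt_pow 3 r).const_mul c)).sub
      (hasDerivAt_arcsin (by linarith [hr.1]) hr.2.ne)).congr_deriv ?_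
    norm_num [f']
    ring
  have hpersist : ∀ r ∈ Ioo (0 : ℝ) 1, ∀ u ∈ Ioo (0 : ℝ) 1, r ≤ u → f' r < 0 → f' u ≤ 0 := by
    intro r hr u hu hru hneg
    rw [sub_neg, one_add_mul_sq_lt_one_div_sqrt_iff (by linarith) hr.1 hr.2] at hneg
    refine (sub_neg.2 ((one_add_mul_sq_lt_one_div_sqrt_iff (by linarith) hu.1 hu.2).2 ?_)).le
    exact quadratic_neg_of_le (by linarith) (by positivity) (sq_nonneg r) hneg
      (pow_le_pow_left₀ hr.1.le hru 2)
  have hmin := min_le_of_deriv_neg_persists (by fun_prop) hderiv hpersist ⟨hs0, hs1⟩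
  have h0 : f 0 = 0 := by simp [f]
  have h1 : f 1 = 0 := by simp only [f, arcsin_one, hc_def]; ring
  rw [h0, h1, min_self] at hmin
  simp only [f] at hmin
  linarith

lemma intervalIntegrable_one_div_sqrt_one_sub_sq :
    IntervalIntegrable (fun t : ℝ => 1 / √(1 - t ^ 2)) volume 0 1 := by
  refine intervalIntegrable_deriv_of_nonneg continuous_arcsin.continuousOn (fun t ht => ?_)
    (fun t _ => by positivity)
  simp only [zero_le_one, min_eq_left, max_eq_right, mem_Ioo] at ht
  exact hasDerivAt_arcsin (by linarith) ht.2.ne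

lemma intervalIntegrable_div_sqrt_one_sub_sq {φ : ℝ → ℝ} (hφ : ContinuousOn φ (Icc 0 1)) :
    IntervalIntegrable (fun t => φ t / √(1 - t ^ 2)) volume 0 1 := by
  simpa only [mul_one_div] using intervalIntegrable_one_div_sqrt_one_sub_sq.continuousOn_mul
    (by rwa [uIcc_of_le zero_le_one])

lemma integral_pow_three_div_sqrt_one_sub_sq :
    ∫ t in (0 : ℝ)..1, t ^ 3 / √(1 - t ^ 2) = 2 / 3 := by
  have hF : ∀ t ∈ Ioo (0 : ℝ) 1,
      HasDerivAt (fun t => -((2 + t ^ 2) * √(1 - t ^ 2)) / 3) (t ^ 3 / √(1 - t ^ 2)) t := by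
    intro t ht
    have hu : 0 < 1 - t ^ 2 := by nlinarith [ht.1, ht.2]
    have hw := sqrt_pos.2 hu
    have hsqrt : HasDerivAt (fun t => √(1 - t ^ 2)) (-(2 * t) / (2 * √(1 - t ^ 2))) t :=
      ((hasDerivAt_pow 2 t).const_sub 1).sqrt hu.ne' |>.congr_deriv (by ring)
    refine ((((hasDerivAt_pow 2 t).const_add 2).mul hsqrt).neg.div_const 3).congr_deriv ?_
    field_simp
    rw [sq_sqrt hu.le]
    ring
  rw [integral_eq_sub_of_hasDerivAt_of_le zero_le_one (by fun_prop) hF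
    (intervalIntegrable_div_sqrt_one_sub_sq (by fun_prop))]
  norm_num

lemma abs_integral_div_sqrt_sub_le {φ ψ : ℝ → ℝ} {C : ℝ} (hφ : ContinuousOn φ (Icc 0 1))
    (hψ : ContinuousOn ψ (Icc 0 1)) (hle : ∀ t ∈ Icc (0 : ℝ) 1, |φ t - ψ t| ≤ C * t ^ 3) :
    |(∫ t in (0 : ℝ)..1, φ t / √(1 - t ^ 2)) - ∫ t in (0 : ℝ)..1, ψ t / √(1 - t ^ 2)|
      ≤ 2 / 3 * C := by
  rw [← integral_sub (intervalIntegrable_div_sqrt_one_sub_sq hφ)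
    (intervalIntegrable_div_sqrt_one_sub_sq hψ)]
  calc |∫ t in (0 : ℝ)..1, φ t / √(1 - t ^ 2) - ψ t / √(1 - t ^ 2)|
      ≤ ∫ t in (0 : ℝ)..1, C * (t ^ 3 / √(1 - t ^ 2)) := by
        rw [← Real.norm_eq_abs]
        refine norm_integral_le_of_norm_le zero_le_one (Filter.Eventually.of_forall fun t ht => ?_)
          ((intervalIntegrable_div_sqrt_one_sub_sq (φ := (· ^ 3)) (by fun_prop)).const_mul C)
        rw [Real.norm_eq_abs, ← sub_div, abs_div, abs_of_nonneg (sqrt_nonneg _), ← mul_div_assoc]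
        exact div_le_div_of_nonneg_right (hle t (Ioc_subset_Icc_self ht)) (sqrt_nonneg _)
    _ = 2 / 3 * C := by
        rw [intervalIntegral.integral_const_mul, integral_pow_three_div_sqrt_one_sub_sq, mul_comm]

lemma abs_cos_mul_arcsin_sub_cos_mul_le {x s : ℝ} (hx : 0 ≤ x) (hs0 : 0 ≤ s) (hs1 : s ≤ 1) :
    |cos (x * arcsin s) - cos (x * s)| ≤ x * (π / 2 - 1) * s ^ 3 := by
  have hself : s ≤ arcsin s := by
    simpa only [sin_arcsin (by linarith) hs1] using sin_le (arcsin_nonneg.2 hs0)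
  calc |cos (x * arcsin s) - cos (x * s)| ≤ |x * arcsin s - x * s| := abs_cos_sub_cos_le _ _
    _ = x * (arcsin s - s) := by rw [← mul_sub, abs_of_nonneg (by nlinarith)]
    _ ≤ x * (π / 2 - 1) * s ^ 3 := by
        rw [mul_assoc]
        gcongr
        linarith [arcsin_le_add_mul_pow_three hs0 hs1]

theorem I_two_term_bound (b x : ℝ) (hb : 1 < b) (hx : 0 < x)
    (hJ : ∀ y : ℝ, 0 < y →
      |(2 / π) * ∫ t in (0:ℝ)..1, Real.cos (y * t) / Real.sqrt (1 - t ^ 2)| ≤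
        Real.sqrt (2 / (π * y))) :
    |(2 / π) * ∫ t in (0:ℝ)..1,
        Real.cos (x * Real.arcsin (t / b)) / Real.sqrt (1 - t ^ 2)| ≤
      ((2 - 4 / π) / 3) * x / b ^ 3 + Real.sqrt (2 / π) * Real.sqrt (b / x) := by
  have hb0 : 0 < b := one_pos.trans hb
  have hdiff := abs_integral_div_sqrt_sub_le (C := x * (π / 2 - 1) / b ^ 3)
    (φ := fun t => cos (x * arcsin (t / b))) (ψ := fun t => cos (x / b * t))
    (by fun_prop) (by fun_prop) fun t ht => by
      have hs1 : t / b ≤ 1 := (div_le_one hb0).2 (by linarith [ht.2])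
      have := abs_cos_mul_arcsin_sub_cos_mul_le hx.le (by positivity [ht.1]) hs1
      rw [div_mul_eq_mul_div, mul_div_assoc]
      exact this.trans_eq (by ring)
  have hJ' : |(2 / π) * ∫ t in (0 : ℝ)..1, cos (x / b * t) / √(1 - t ^ 2)|
      ≤ √(2 / π) * √(b / x) := by
    rw [← sqrt_mul (by positivity)]
    convert hJ (x / b) (by positivity) using 2
    field_simp
  calc _ = |(2 / π) * ((∫ t in (0 : ℝ)..1, cos (x * arcsin (t / b)) / √(1 - t ^ 2))
          - ∫ t in (0 : ℝ)..1, cos (x / b * t) / √(1 - t ^ 2))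
        + (2 / π) * ∫ t in (0 : ℝ)..1, cos (x / b * t) / √(1 - t ^ 2)| := by
        rw [← mul_add, sub_add_cancel]
    _ ≤ (2 / π) * (2 / 3 * (x * (π / 2 - 1) / b ^ 3)) + √(2 / π) * √(b / x) := by
        refine (abs_add_le _ _).trans (add_le_add ?_ hJ')
        rw [abs_mul, abs_of_pos (by positivity)]
        gcongr
    _ = _ := by field_simp; ring
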